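/- arXiv:2010.04540 — 3 statements merged into one kernel-verified Lean document; each statement's English description precedes it below -/
import Mathlib

section
/- Let A, B ⊆ ℝ² be convex closed sets with A ⊆ B, and let a ∈ H[A]. Then the sup-norm metric projection Pr(a;B) lies on the line segment [Pr(a;A), a], and ‖Pr(a;A) − Pr(a;B)‖_∞ = dist(a,A) − dist(a,B). -/
/-!
Write `r = dist(a, A)` and `s = dist(a, B)`. Moving a sup-norm nearest point `p` of a convex set
`C` slightly towards any `w ∈ C` cannot decrease `‖p - a‖`, so some coordinate `k` with
`|p k - a k| = ‖p - a‖ = t` satisfies `t² ≤ (p k - a k) (w k - a k)`. As `a ∈ H[A]`, the set `A`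
(hence `B`) has points arbitrarily close to `a` on either side in each coordinate; testing against
them shows that `pa - a` and `pb - a` are corners of the squares of radii `r` and `s`. Testing the
optimality of `pb` against `pa ∈ B` shows the two corners agree in some coordinate `j`; if they
disagreed in the other one, a point `v ∈ A` within `s` of `a` in coordinate `j` would contradict
the optimality of `pa` or of `pb`. Hence `pb - a = (s / r) • (pa - a)`.
-/

open Filter Topology Metric Set

/-- A closed interval of `ℝ` (possibly unbounded): a closed order-connected set. -/
def IsClosedInterval (I : Set ℝ) : Prop := IsClosed I ∧ I.OrdConnected

/-- The rectangular hull of a set `A ⊆ ℝ²`: the intersection of all closed axis-parallel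
rectangles containing `A`. Here `ℝ²` carries the sup norm (the `Pi` norm on `Fin 2 → ℝ`). -/
def rectHull (A : Set (Fin 2 → ℝ)) : Set (Fin 2 → ℝ) :=
  ⋂₀ {R : Set (Fin 2 → ℝ) |
      (∃ I₁ I₂ : Set ℝ, IsClosedInterval I₁ ∧ IsClosedInterval I₂ ∧
        R = {x | x 0 ∈ I₁ ∧ x 1 ∈ I₂}) ∧ A ⊆ R}

lemma eventually_abs_convexComb_lt {α β t : ℝ} (hα : |α| ≤ t) (h : |α| < t ∨ α * β < t ^ 2) :
    ∀ᶠ θ in 𝓝[>] 0, |(1 - θ) * α + θ * β| < t := by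
  have hcont : Continuous fun θ : ℝ => (1 - θ) * α + θ * β := by fun_prop
  rcases hα.lt_or_eq with hlt | heq
  · have hlim := (hcont.abs.tendsto 0).mono_left (nhdsWithin_le_nhds (s := Ioi 0))
    simp only [sub_zero, one_mul, zero_mul, add_zero] at hlim
    exact hlim.eventually (gt_mem_nhds hlt)
  · have hαβ : α * β < t ^ 2 := h.resolve_left heq.not_lt
    have ht : 0 < t := by
      refine (heq ▸ abs_nonneg α).lt_of_ne fun h0 => ?_
      rw [← h0, abs_eq_zero] at heq
      simp [heq, ← h0] at hαβ
    have hsq : α * α = t * t := by rw [← abs_mul_abs_self, heq]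
    have hlim : Tendsto (fun θ => α * ((1 - θ) * α + θ * β)) (𝓝[>] 0) (𝓝 (t * t)) := by
      have hc : Continuous fun θ : ℝ => α * ((1 - θ) * α + θ * β) := by fun_prop
      have := (hc.tendsto 0).mono_left (nhdsWithin_le_nhds (s := Ioi 0))
      simpa only [sub_zero, one_mul, zero_mul, add_zero, hsq] using this
    filter_upwards [self_mem_nhdsWithin,
      hlim.eventually (lt_mem_nhds (show -(t * t) < t * t by nlinarith))] with θ (hθ : 0 < θ) hlow
    have hup : α * ((1 - θ) * α + θ * β) < t * t := by nlinarith
    have : |α| * |(1 - θ) * α + θ * β| < t * t := by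
      rw [← abs_mul]; exact abs_lt.2 ⟨by linarith, hup⟩
    rw [heq] at this
    exact lt_of_mul_lt_mul_left this ht.le

lemma Convex.infDist_lt_of_forall_coord {ι : Type*} [Fintype ι] {C : Set (ι → ℝ)}
    (hC : Convex ℝ C) {a p w : ι → ℝ} (hp : p ∈ C) (hw : w ∈ C) {t : ℝ} (ht : 0 < t)
    (h : ∀ k, |p k - a k| ≤ t ∧ (|p k - a k| < t ∨ (p k - a k) * (w k - a k) < t ^ 2)) :
    infDist a C < t := by
  have hev : ∀ᶠ θ in 𝓝[>] (0 : ℝ),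
      (0 < θ ∧ θ < 1) ∧ ∀ k, |(1 - θ) * (p k - a k) + θ * (w k - a k)| < t :=
    (eventually_mem_nhdsWithin.and (eventually_nhdsWithin_of_eventually_nhds
      (eventually_lt_nhds zero_lt_one))).and
      (eventually_all.2 fun k => eventually_abs_convexComb_lt (h k).1 (h k).2)
  obtain ⟨θ, ⟨hθ0, hθ1⟩, hθ⟩ := hev.exists
  have hx : (1 - θ) • p + θ • w ∈ C := hC hp hw (by linarith) hθ0.le (by ring)
  refine (infDist_le_dist_of_mem hx).trans_lt ((dist_pi_lt_iff ht).2 fun k => ?_)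
  rw [dist_comm, Real.dist_eq]
  convert hθ k using 2
  simp only [Pi.add_apply, Pi.smul_apply, smul_eq_mul]
  ring

lemma Convex.exists_sq_le_mul_of_dist_eq_infDist {ι : Type*} [Fintype ι] {C : Set (ι → ℝ)}
    (hC : Convex ℝ C) {a p w : ι → ℝ} (hp : p ∈ C) (hw : w ∈ C) {t : ℝ}
    (hpd : dist a p = t) (hCt : infDist a C = t) (ht : 0 < t) :
    ∃ k, |p k - a k| = t ∧ t ^ 2 ≤ (p k - a k) * (w k - a k) := by
  by_contra! h
  refine (hCt ▸ hC.infDist_lt_of_forall_coord hp hw ht fun k => ?_).false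
  have hle : |p k - a k| ≤ t := by
    rw [← hpd, abs_sub_comm, ← Real.dist_eq]; exact dist_le_pi_dist a p k
  exact ⟨hle, hle.lt_or_eq.imp_right (h k)⟩

lemma rectHull_mono {A B : Set (Fin 2 → ℝ)} (h : A ⊆ B) : rectHull A ⊆ rectHull B :=
  sInter_subset_sInter fun _ hR => ⟨hR.1, h.trans hR.2⟩

lemma apply_mem_of_mem_rectHull {A : Set (Fin 2 → ℝ)} {a : Fin 2 → ℝ} (ha : a ∈ rectHull A)
    {i : Fin 2} {I : Set ℝ} (hI : IsClosedInterval I) (hAI : ∀ u ∈ A, u i ∈ I) : a i ∈ I := by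
  have huniv : IsClosedInterval univ := ⟨isClosed_univ, ordConnected_univ⟩
  fin_cases i
  · exact (mem_sInter.1 ha _ ⟨⟨I, univ, hI, huniv, rfl⟩, fun u hu => ⟨hAI u hu, trivial⟩⟩).1
  · exact (mem_sInter.1 ha _ ⟨⟨univ, I, huniv, hI, rfl⟩, fun u hu => ⟨trivial, hAI u hu⟩⟩).2

lemma exists_mul_sub_lt_of_mem_rectHull {A : Set (Fin 2 → ℝ)} {a : Fin 2 → ℝ}
    (ha : a ∈ rectHull A) (i : Fin 2) {α ε : ℝ} (hα : α ≠ 0) (hε : 0 < ε) :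
    ∃ u ∈ A, α * (u i - a i) < |α| * ε := by
  by_contra! h
  rcases hα.lt_or_gt with hα | hα
  · have := apply_mem_of_mem_rectHull ha (I := Iic (a i - ε)) ⟨isClosed_Iic, ordConnected_Iic⟩
      fun u hu => by
        have := h u hu
        rw [abs_of_neg hα] at this
        exact mem_Iic.2 (by nlinarith)
    linarith [mem_Iic.1 this]
  · have := apply_mem_of_mem_rectHull ha (I := Ici (a i + ε)) ⟨isClosed_Ici, ordConnected_Ici⟩
      fun u hu => by
        have := h u hu
        rw [abs_of_pos hα] at this
        exact mem_Ici.2 (by nlinarith)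
    linarith [mem_Ici.1 this]

lemma Convex.abs_sub_eq_of_mem_rectHull {C : Set (Fin 2 → ℝ)} (hC : Convex ℝ C)
    {a p : Fin 2 → ℝ} (ha : a ∈ rectHull C) (hp : p ∈ C) {t : ℝ} (hpd : dist a p = t)
    (hCt : infDist a C = t) (ht : 0 < t) (i : Fin 2) : |p i - a i| = t := by
  obtain ⟨j, hj, -⟩ := hC.exists_sq_le_mul_of_dist_eq_infDist hp hp hpd hCt ht
  by_contra hi
  have hpj : p j - a j ≠ 0 := abs_pos.1 (hj ▸ ht)
  obtain ⟨u, hu, hu_lt⟩ := exists_mul_sub_lt_of_mem_rectHull ha j hpj ht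
  obtain ⟨k, hk, hk_le⟩ := hC.exists_sq_le_mul_of_dist_eq_infDist hp hu hpd hCt ht
  have hji : j ≠ i := by rintro rfl; exact hi hj
  have hki : k ≠ i := by rintro rfl; exact hi hk
  rw [show k = j by omega] at hk_le
  rw [hj] at hu_lt
  linarith

lemma mul_eq_or_mul_eq_neg_of_abs_eq {x y r s : ℝ} (hx : |x| = r) (hy : |y| = s) :
    r * y = s * x ∨ r * y = -(s * x) := by
  subst hx hy
  exact abs_eq_abs.1 (by rw [abs_mul, abs_mul, abs_abs, abs_abs, mul_comm])

lemma Convex.exists_mul_sub_eq_mul_sub {B : Set (Fin 2 → ℝ)} (hB : Convex ℝ B)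
    {a pa pb : Fin 2 → ℝ} (hpb : pb ∈ B) (hpa : pa ∈ B) {r s : ℝ} (hpbd : dist a pb = s)
    (hBs : infDist a B = s) (hs : 0 < s) (hα : ∀ k, |pa k - a k| = r) (hr : 0 < r) :
    ∃ j, r * (pb j - a j) = s * (pa j - a j) := by
  obtain ⟨j, hβj, hj⟩ := hB.exists_sq_le_mul_of_dist_eq_infDist hpb hpa hpbd hBs hs
  refine ⟨j, (mul_eq_or_mul_eq_neg_of_abs_eq (hα j) hβj).resolve_right fun h => ?_⟩
  have hαα : (pa j - a j) * (pa j - a j) = r * r := by rw [← abs_mul_abs_self, hα]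
  have hneg : r * ((pb j - a j) * (pa j - a j)) = -(s * (r * r)) := by
    rw [← hαα]; linear_combination (pa j - a j) * h
  nlinarith [mul_le_mul_of_nonneg_left hj hr.le, mul_pos hr hs]

lemma mul_sub_eq_mul_sub_of_subset {A B : Set (Fin 2 → ℝ)} (hA : Convex ℝ A)
    (hB : Convex ℝ B) (hAB : A ⊆ B) {a pa pb : Fin 2 → ℝ} (ha : a ∈ rectHull A)
    (hpa : pa ∈ A) (hpb : pb ∈ B) {r s : ℝ} (hpad : dist a pa = r) (hAr : infDist a A = r)
    (hpbd : dist a pb = s) (hBs : infDist a B = s) (hs : 0 < s) (k : Fin 2) :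
    r * (pb k - a k) = s * (pa k - a k) := by
  have hsr : s ≤ r := hAr ▸ hBs ▸ infDist_le_infDist_of_subset hAB ⟨pa, hpa⟩
  have hr : 0 < r := hs.trans_le hsr
  have hα : ∀ k, |pa k - a k| = r := hA.abs_sub_eq_of_mem_rectHull ha hpa hpad hAr hr
  have hβ : |pb k - a k| = s :=
    hB.abs_sub_eq_of_mem_rectHull (rectHull_mono hAB ha) hpb hpbd hBs hs k
  obtain ⟨j, hmatch⟩ := hB.exists_mul_sub_eq_mul_sub hpb (hAB hpa) hpbd hBs hs hα hr
  by_cases hkj : k = j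
  · exact hkj ▸ hmatch
  refine (mul_eq_or_mul_eq_neg_of_abs_eq (hα k) hβ).resolve_right fun hk => ?_
  have hpaj : pa j - a j ≠ 0 := abs_pos.1 ((hα j).symm ▸ hr)
  obtain ⟨v, hv, hv_lt⟩ := exists_mul_sub_lt_of_mem_rectHull ha j hpaj hs
  rw [hα] at hv_lt
  obtain ⟨k', -, hk'⟩ := hA.exists_sq_le_mul_of_dist_eq_infDist hpa hv hpad hAr hr
  have hk'j : k' ≠ j := by
    rintro rfl; nlinarith [mul_le_mul_of_nonneg_left hsr hr.le]
  rw [show k' = k by omega] at hk'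
  obtain ⟨k'', -, hk''⟩ := hB.exists_sq_le_mul_of_dist_eq_infDist hpb (hAB hv) hpbd hBs hs
  rcases (by omega : k'' = j ∨ k'' = k) with rfl | rfl
  · have hv_eq : r * ((pb k'' - a k'') * (v k'' - a k'')) =
        s * ((pa k'' - a k'') * (v k'' - a k'')) := by
      linear_combination (v k'' - a k'') * hmatch
    nlinarith [mul_le_mul_of_nonneg_left hk'' hr.le, mul_lt_mul_of_pos_left hv_lt hs]
  · have hv_eq : r * ((pb k'' - a k'') * (v k'' - a k'')) =
        -(s * ((pa k'' - a k'') * (v k'' - a k''))) := by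
      linear_combination (v k'' - a k'') * hk
    nlinarith [mul_le_mul_of_nonneg_left hk'' hr.le, mul_le_mul_of_nonneg_left hk' hs.le,
      mul_pos hr hs]

theorem stmt_3_general (A B : Set (Fin 2 → ℝ)) (hAconv : Convex ℝ A)
    (hBconv : Convex ℝ B) (hAB : A ⊆ B)
    (a : Fin 2 → ℝ) (ha : a ∈ rectHull A)
    (pa pb : Fin 2 → ℝ) (hpaA : pa ∈ A) (hpbB : pb ∈ B)
    (hpa : dist a pa = Metric.infDist a A) (hpb : dist a pb = Metric.infDist a B) :
    pb ∈ segment ℝ pa a ∧ ‖pa - pb‖ = Metric.infDist a A - Metric.infDist a B := by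
  have hsr : infDist a B ≤ infDist a A := infDist_le_infDist_of_subset hAB ⟨pa, hpaA⟩
  generalize hr_def : infDist a A = r at hpa hsr ⊢
  generalize hs_def : infDist a B = s at hpb hsr ⊢
  have hnorm : ‖pa - a‖ = r := by rw [← dist_eq_norm, dist_comm, hpa]
  rcases (hs_def ▸ infDist_nonneg : 0 ≤ s).eq_or_lt with rfl | hs
  · obtain rfl : pb = a := (dist_eq_zero.1 hpb).symm
    exact ⟨right_mem_segment ℝ pa pb, by rw [hnorm, sub_zero]⟩
  have hr : 0 < r := hs.trans_le hsr
  have hpb_eq : pb = a + (s / r) • (pa - a) := by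
    ext k
    have :=
      mul_sub_eq_mul_sub_of_subset hAconv hBconv hAB ha hpaA hpbB hpa hr_def hpb hs_def hs k
    simp only [Pi.add_apply, Pi.smul_apply, Pi.sub_apply, smul_eq_mul]
    field_simp
    linarith
  have hc1 : s / r ≤ 1 := div_le_one_of_le₀ hsr hr.le
  refine ⟨⟨s / r, 1 - s / r, by positivity, by linarith, by ring, by rw [hpb_eq]; module⟩, ?_⟩
  rw [show pa - pb = (1 - s / r) • (pa - a) by rw [hpb_eq]; module, norm_smul, hnorm,
    Real.norm_of_nonneg (by linarith)]
  field_simp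

/-- **Lemma (W-ABPR)**: let `A ⊆ B ⊆ ℝ²` (sup norm) be nonempty convex closed sets and
`a ∈ H[A]`. Then the sup-norm metric projection `Pr(a;B)` lies on the segment
`[Pr(a;A), a]`, and `‖Pr(a;A) − Pr(a;B)‖ = dist(a,A) − dist(a,B)`. -/
theorem stmt_3 (A B : Set (Fin 2 → ℝ)) (hAconv : Convex ℝ A) (hAclosed : IsClosed A)
    (hAne : A.Nonempty) (hBconv : Convex ℝ B) (hBclosed : IsClosed B) (hAB : A ⊆ B)
    (a : Fin 2 → ℝ) (ha : a ∈ rectHull A)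
    (pa pb : Fin 2 → ℝ) (hpaA : pa ∈ A) (hpbB : pb ∈ B)
    (hpa : dist a pa = Metric.infDist a A) (hpb : dist a pb = Metric.infDist a B) :
    pb ∈ segment ℝ pa a ∧ ‖pa - pb‖ = Metric.infDist a A - Metric.infDist a B :=
  stmt_3_general A B hAconv hBconv hAB a ha pa pb hpaA hpbB hpa hpb
end

section
/- Let K₁, K₂ ⊆ ℝ² be convex closed sets with K₁ ∩ K₂ ≠ ∅, and let Π be a closed axis-parallel rectangle centered at 0. Then (K₁ ∩ K₂) + Π = (K₁ + Π) ∩ (K₂ + Π) ∩ H[(K₁ ∩ K₂) + Π]. -/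
open Pointwise

/-! The inclusion `⊆` is clear. Conversely, `x ∈ K₁ + Π` and `x ∈ K₂ + Π` say that `K₁` and `K₂`
each meet `x - Π = S₀ ∩ S₁`, where `Sᵢ = {z | x i - z i ∈ Iᵢ}`. By Helly's theorem in the plane
it suffices that `K₁ ∩ K₂` meets each slab `Sᵢ`. If it does not, the hull condition makes the
projection of `K₁ ∩ K₂` to the `i`-th axis an interval with an endpoint `m` that is not attained,
while both `K₁` and `K₂` reach the line `z i = m`. As `K₁ ∩ K₂` is closed, its points near that
line escape to infinity along it, so a segment from the point of `K₁` on the line to such a far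
point passes arbitrarily close to the point of `K₂` on the line, or vice versa; closedness then
puts a point of `K₁ ∩ K₂` on the line after all. -/

open Set

theorem Convex.nonempty_iInter_of_forall_ne_mem {ι 𝕜 E : Type*} [Field 𝕜] [LinearOrder 𝕜]
    [IsStrictOrderedRing 𝕜] [AddCommGroup E] [Module 𝕜 E] [FiniteDimensional 𝕜 E] [Fintype ι]
    (hι : Module.finrank 𝕜 E + 2 ≤ Fintype.card ι) {F : ι → Set E} (hF : ∀ i, Convex 𝕜 (F i))
    {w : ι → E} (hw : ∀ i j, i ≠ j → w i ∈ F j) : (⋂ i, F i).Nonempty := by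
  have hw' : ¬ AffineIndependent 𝕜 w := fun h => by
    have := (h.card_le_finrank_succ).trans (Nat.succ_le_succ (Submodule.finrank_le _))
    omega
  obtain ⟨I, p, hpI, hpIc⟩ := Convex.radon_partition hw'
  refine ⟨p, mem_iInter.2 fun j => ?_⟩
  by_cases hj : j ∈ I
  · refine convexHull_min ?_ (hF j) hpIc
    rintro _ ⟨i, hi, rfl⟩
    exact hw i j fun h => hi (h ▸ hj)
  · refine convexHull_min ?_ (hF j) hpI
    rintro _ ⟨i, hi, rfl⟩
    exact hw i j fun h => hj (h ▸ hi)

theorem convex_setOf_sub_apply_mem {ι : Type*} {I : Set ℝ} (hI : Convex ℝ I) (x : ι → ℝ) (i : ι) :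
    Convex ℝ {z : ι → ℝ | x i - z i ∈ I} :=
  hI.affine_preimage
    (AffineMap.const ℝ (ι → ℝ) (x i) - (LinearMap.proj (R := ℝ) (φ := fun _ => ℝ) i).toAffineMap)

theorem exists_mem_closure_sub_mem_of_mem_upperBounds {α : Type*}
    [ConditionallyCompleteLinearOrder α] [TopologicalSpace α] [OrderTopology α] [AddCommGroup α] [IsOrderedAddMonoid α]
    {P I : Set α} {y : α} (hI : IsClosed I) (hy : y ∈ closure (P + I))
    (hub : y ∈ upperBounds (P + I)) :
    ∃ m ∈ closure P, y - m ∈ I ∧ (∀ p ∈ P, p ≤ m) ∧ ∀ u ∈ I, m ≤ y - u := by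
  obtain ⟨_, ⟨p₀, hp₀, u₀, hu₀, rfl⟩⟩ := closure_nonempty_iff.mp ⟨y, hy⟩
  have hP : BddAbove P := ⟨y - u₀, fun p hp => le_sub_iff_add_le.mpr (hub ⟨p, hp, u₀, hu₀, rfl⟩)⟩
  have hI' : BddAbove I := ⟨y - p₀, fun u hu => le_sub_iff_add_le'.mpr (hub ⟨p₀, hp₀, u, hu, rfl⟩)⟩
  have hy' : y = sSup P + sSup I := (isLUB_of_mem_closure hub hy).unique
    ((isLUB_csSup ⟨p₀, hp₀⟩ hP).add (isLUB_csSup ⟨u₀, hu₀⟩ hI'))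
  refine ⟨sSup P, csSup_mem_closure ⟨p₀, hp₀⟩ hP, ?_, fun p hp => le_csSup hP hp, fun u hu => ?_⟩
  · rw [hy', add_sub_cancel_left]
    exact hI.csSup_mem ⟨u₀, hu₀⟩ hI'
  · rw [hy', add_sub_assoc, le_add_iff_nonneg_right, sub_nonneg]
    exact le_csSup hI' hu

theorem exists_mem_closure_mem_uIcc {P I : Set ℝ} {y : ℝ} (hP : P.OrdConnected) (hIc : IsClosed I)
    (hI : I.OrdConnected) (hy : y ∈ closure (P + I)) (hyA : y ∉ P + I) :
    ∃ m ∈ closure P, y - m ∈ I ∧ ∀ p ∈ P, ∀ u ∈ I, m ∈ uIcc p (y - u) := by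
  have hA : (P + I).OrdConnected := ((hP.convex (𝕜 := ℝ)).add (hI.convex (𝕜 := ℝ))).ordConnected
  obtain ⟨q, hq⟩ := closure_nonempty_iff.mp ⟨y, hy⟩
  rcases (ne_of_mem_of_not_mem hq hyA).lt_or_gt with hqy | hyq
  · have hub : y ∈ upperBounds (P + I) := fun z hz =>
      le_of_not_gt fun hyz => hyA (hA.out hq hz ⟨hqy.le, hyz.le⟩)
    obtain ⟨m, hmP, hmI, hPm, hmI'⟩ := exists_mem_closure_sub_mem_of_mem_upperBounds hIc hy hub
    exact ⟨m, hmP, hmI, fun p hp u hu => Icc_subset_uIcc ⟨hPm p hp, hmI' u hu⟩⟩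
  · have hlb : y ∈ lowerBounds (P + I) := fun z hz =>
      le_of_not_gt fun hzy => hyA (hA.out hz hq ⟨hzy.le, hyq.le⟩)
    -- the upper-bound case read in `ℝᵒᵈ`
    obtain ⟨m, hmP, hmI, hPm, hmI'⟩ :=
      exists_mem_closure_sub_mem_of_mem_upperBounds (α := ℝᵒᵈ) hIc hy hlb
    exact ⟨m, hmP, hmI, fun p hp u hu => Icc_subset_uIcc' ⟨hmI' u hu, hPm p hp⟩⟩

theorem mem_image_of_mem_closure_of_isBounded {X Y : Type*} [PseudoMetricSpace X] [ProperSpace X]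
    [MetricSpace Y] {C : Set X} (hC : IsClosed C) {f : X → Y} (hf : Continuous f) {y : Y} {δ : ℝ}
    (hy : y ∈ closure (f '' C)) (hδ : 0 < δ)
    (hb : Bornology.IsBounded (C ∩ f ⁻¹' Metric.closedBall y δ)) : y ∈ f '' C := by
  have hS : IsCompact (C ∩ f ⁻¹' Metric.closedBall y δ) :=
    Metric.isCompact_of_isClosed_isBounded (hC.inter (Metric.isClosed_closedBall.preimage hf)) hb
  have hy' : y ∈ closure (f '' (C ∩ f ⁻¹' Metric.closedBall y δ)) := by
    rw [image_inter_preimage, inter_comm]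
    exact closure_mono (inter_subset_inter_left _ Metric.ball_subset_closedBall)
      (Metric.isOpen_ball.inter_closure ⟨Metric.mem_ball_self hδ, hy⟩)
  exact image_mono inter_subset_left ((hS.image hf).isClosed.closure_subset hy')

theorem fin_two_eq_or_eq_rev (i k : Fin 2) : k = i ∨ k = i.rev := by
  revert i k; decide

theorem mem_uIcc_or_mem_uIcc_of_max_abs_lt {x y z : ℝ} (h : max |x| |y| < |z|) :
    y ∈ uIcc x z ∨ x ∈ uIcc y z := by
  grind [max_lt_iff, abs_lt, mem_uIcc, abs_cases]

theorem exists_abs_apply_rev_gt {C : Set (Fin 2 → ℝ)} (hC : IsClosed C) {i : Fin 2} {m δ : ℝ}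
    (hm : m ∈ closure ((· i) '' C)) (hmC : m ∉ (· i) '' C) (hδ : 0 < δ) (N : ℝ) :
    ∃ c ∈ C, |c i - m| ≤ δ ∧ N < |c i.rev| := by
  by_contra! h
  refine hmC (mem_image_of_mem_closure_of_isBounded hC (continuous_apply i) hm hδ
    ((Metric.isBounded_closedBall (x := 0) (r := |m| + δ + |N|)).subset ?_))
  rintro c ⟨hc, hci⟩
  rw [mem_preimage, Metric.mem_closedBall, Real.dist_eq] at hci
  rw [mem_closedBall_zero_iff, pi_norm_le_iff_of_nonneg (by positivity)]
  intro k
  rw [Real.norm_eq_abs]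
  rcases fin_two_eq_or_eq_rev i k with rfl | rfl
  · linarith [abs_sub_abs_le_abs_sub (c k) m, abs_nonneg N]
  · linarith [h c hc hci, le_abs_self N, abs_nonneg m]

theorem exists_mem_dist_le_abs_sub {K : Set (Fin 2 → ℝ)} (hK : Convex ℝ K) {a b c : Fin 2 → ℝ}
    (ha : a ∈ K) (hc : c ∈ K) {i : Fin 2} (hb : b i = a i)
    (hbc : b i.rev ∈ uIcc (a i.rev) (c i.rev)) : ∃ p ∈ K, dist p b ≤ |c i - a i| := by
  obtain ⟨t, ht, hbt⟩ : ∃ t ∈ Icc (0 : ℝ) 1, a i.rev + t * (c i.rev - a i.rev) = b i.rev := by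
    have := intermediate_value_uIcc (a := (0 : ℝ)) (b := 1)
      (f := fun t => a i.rev + t * (c i.rev - a i.rev)) (by fun_prop)
    simpa [uIcc_of_le zero_le_one] using this (by simpa using hbc)
  refine ⟨a + t • (c - a), hK.add_smul_sub_mem ha hc ht,
    (dist_pi_le_iff (abs_nonneg _)).2 fun k => ?_⟩
  rcases fin_two_eq_or_eq_rev i k with rfl | rfl
  · simp only [Pi.add_apply, Pi.smul_apply, Pi.sub_apply, smul_eq_mul, Real.dist_eq, hb,
      add_sub_cancel_left, abs_mul, abs_of_nonneg ht.1]
    exact mul_le_of_le_one_left (abs_nonneg _) ht.2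
  · simp [← hbt]

theorem mem_image_apply_inter_of_mem_closure {K₁ K₂ : Set (Fin 2 → ℝ)}
    (hK₁ : Convex ℝ K₁) (hK₁c : IsClosed K₁) (hK₂ : Convex ℝ K₂) (hK₂c : IsClosed K₂)
    {i : Fin 2} {m : ℝ} (hm : m ∈ closure ((· i) '' (K₁ ∩ K₂))) {a₁ a₂ : Fin 2 → ℝ}
    (ha₁ : a₁ ∈ K₁) (ha₂ : a₂ ∈ K₂) (h₁ : a₁ i = m) (h₂ : a₂ i = m) :
    m ∈ (· i) '' (K₁ ∩ K₂) := by
  by_contra hmC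
  obtain ⟨ε₁, hε₁, hball₁⟩ :=
    Metric.isOpen_iff.mp hK₁c.isOpen_compl a₂ fun h => hmC ⟨a₂, ⟨h, ha₂⟩, h₂⟩
  obtain ⟨ε₂, hε₂, hball₂⟩ :=
    Metric.isOpen_iff.mp hK₂c.isOpen_compl a₁ fun h => hmC ⟨a₁, ⟨ha₁, h⟩, h₁⟩
  obtain ⟨c, hc, hcm, hcN⟩ := exists_abs_apply_rev_gt (hK₁c.inter hK₂c) hm hmC
    (half_pos (lt_min hε₁ hε₂)) (max |a₁ i.rev| |a₂ i.rev|)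
  rcases mem_uIcc_or_mem_uIcc_of_max_abs_lt hcN with h | h
  · obtain ⟨p, hp, hpd⟩ := exists_mem_dist_le_abs_sub hK₁ ha₁ hc.1 (h₂.trans h₁.symm) h
    refine hball₁ (Metric.mem_ball.2 ?_) hp
    rw [h₁] at hpd
    linarith [min_le_left ε₁ ε₂]
  · obtain ⟨p, hp, hpd⟩ := exists_mem_dist_le_abs_sub hK₂ ha₂ hc.2 (h₁.trans h₂.symm) h
    refine hball₂ (Metric.mem_ball.2 ?_) hp
    rw [h₂] at hpd
    linarith [min_le_right ε₁ ε₂]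

theorem subset_rectHull (A : Set (Fin 2 → ℝ)) : A ⊆ rectHull A :=
  subset_sInter fun _ hR => hR.2

theorem apply_mem_of_mem_rectHull_s7 {A : Set (Fin 2 → ℝ)} {x : Fin 2 → ℝ} (hx : x ∈ rectHull A)
    {i : Fin 2} {J : Set ℝ} (hJ : IsClosedInterval J) (hA : ∀ a ∈ A, a i ∈ J) : x i ∈ J := by
  have huniv : IsClosedInterval univ := ⟨isClosed_univ, ordConnected_univ⟩
  fin_cases i
  · exact (hx {z | z 0 ∈ J ∧ z 1 ∈ univ}
      ⟨⟨J, univ, hJ, huniv, rfl⟩, fun a ha => ⟨hA a ha, trivial⟩⟩).1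
  · exact (hx {z | z 0 ∈ univ ∧ z 1 ∈ J}
      ⟨⟨univ, J, huniv, hJ, rfl⟩, fun a ha => ⟨trivial, hA a ha⟩⟩).2

theorem exists_mem_inter_sub_apply_mem {K₁ K₂ Rect : Set (Fin 2 → ℝ)}
    (hK₁ : Convex ℝ K₁) (hK₁c : IsClosed K₁) (hK₂ : Convex ℝ K₂) (hK₂c : IsClosed K₂)
    {i : Fin 2} {I : Set ℝ} (hI : IsClosedInterval I) (hRect : ∀ r ∈ Rect, r i ∈ I)
    {x k₁ k₂ : Fin 2 → ℝ} (hx : x ∈ rectHull (K₁ ∩ K₂ + Rect)) (hk₁ : k₁ ∈ K₁) (hk₂ : k₂ ∈ K₂)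
    (hxk₁ : x i - k₁ i ∈ I) (hxk₂ : x i - k₂ i ∈ I) : ∃ c ∈ K₁ ∩ K₂, x i - c i ∈ I := by
  set P := (· i) '' (K₁ ∩ K₂)
  have hP : Convex ℝ P := (hK₁.inter hK₂).linear_image (LinearMap.proj i)
  by_cases hxP : x i ∈ P + I
  · obtain ⟨_, ⟨c, hc, rfl⟩, u, hu, hcu⟩ := hxP
    exact ⟨c, hc, by rwa [← hcu, add_sub_cancel_left]⟩
  have hxcl : x i ∈ closure (P + I) := by
    refine apply_mem_of_mem_rectHull_s7 hx
      ⟨isClosed_closure, (hP.add hI.2.convex).closure.ordConnected⟩ ?_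
    rintro _ ⟨c, hc, r, hr, rfl⟩
    exact subset_closure ⟨c i, ⟨c, hc, rfl⟩, r i, hRect r hr, rfl⟩
  obtain ⟨m, hmP, hmI, hm⟩ := exists_mem_closure_mem_uIcc hP.ordConnected hI.1 hI.2 hxcl hxP
  obtain ⟨c₀, hc₀⟩ : (K₁ ∩ K₂).Nonempty := (closure_nonempty_iff.mp ⟨m, hmP⟩).of_image
  have hline : ∀ {K : Set (Fin 2 → ℝ)} {k : Fin 2 → ℝ}, Convex ℝ K → c₀ ∈ K → k ∈ K →
      x i - k i ∈ I → ∃ a ∈ K, a i = m := fun hK hc₀K hk hxk =>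
    (hK.linear_image (LinearMap.proj i)).ordConnected.uIcc_subset ⟨c₀, hc₀K, rfl⟩ ⟨_, hk, rfl⟩
      (by simpa using hm _ ⟨c₀, hc₀, rfl⟩ _ hxk)
  obtain ⟨a₁, ha₁, h₁⟩ := hline hK₁ hc₀.1 hk₁ hxk₁
  obtain ⟨a₂, ha₂, h₂⟩ := hline hK₂ hc₀.2 hk₂ hxk₂
  obtain ⟨c, hc, rfl⟩ := mem_image_apply_inter_of_mem_closure hK₁ hK₁c hK₂ hK₂c hmP ha₁ ha₂ h₁ h₂
  exact ⟨c, hc, hmI⟩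

theorem stmt_7_general (K₁ K₂ : Set (Fin 2 → ℝ))
    (h₁conv : Convex ℝ K₁) (h₁cl : IsClosed K₁)
    (h₂conv : Convex ℝ K₂) (h₂cl : IsClosed K₂)
    (I₁ I₂ : Set ℝ) (hI₁ : IsClosedInterval I₁) (hI₂ : IsClosedInterval I₂)
    (Rect : Set (Fin 2 → ℝ)) (hRect : Rect = {x | x 0 ∈ I₁ ∧ x 1 ∈ I₂}) :
    (K₁ ∩ K₂) + Rect = (K₁ + Rect) ∩ (K₂ + Rect) ∩ rectHull ((K₁ ∩ K₂) + Rect) := by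
  subst hRect
  refine subset_antisymm (subset_inter (subset_inter (add_subset_add_right inter_subset_left)
    (add_subset_add_right inter_subset_right)) (subset_rectHull _)) ?_
  rintro x ⟨⟨hx₁, hx₂⟩, hH⟩
  obtain ⟨k₁, hk₁, r₁, hr₁, hkr₁⟩ := mem_add.mp hx₁
  obtain ⟨k₂, hk₂, r₂, hr₂, hkr₂⟩ := mem_add.mp hx₂
  have hxk₁ : x - k₁ ∈ {z | z 0 ∈ I₁ ∧ z 1 ∈ I₂} := eq_sub_of_add_eq' hkr₁ ▸ hr₁
  have hxk₂ : x - k₂ ∈ {z | z 0 ∈ I₁ ∧ z 1 ∈ I₂} := eq_sub_of_add_eq' hkr₂ ▸ hr₂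
  obtain ⟨c₀, hc₀, hc₀x⟩ := exists_mem_inter_sub_apply_mem h₁conv h₁cl h₂conv h₂cl (i := 0) hI₁
    (fun r hr => hr.1) hH hk₁ hk₂ hxk₁.1 hxk₂.1
  obtain ⟨c₁, hc₁, hc₁x⟩ := exists_mem_inter_sub_apply_mem h₁conv h₁cl h₂conv h₂cl (i := 1) hI₂
    (fun r hr => hr.2) hH hk₁ hk₂ hxk₁.2 hxk₂.2
  obtain ⟨p, hp⟩ := Convex.nonempty_iInter_of_forall_ne_mem (𝕜 := ℝ)
    (F := ![K₁, K₂, {z | x 0 - z 0 ∈ I₁}, {z | x 1 - z 1 ∈ I₂}])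
    (w := ![k₂, k₁, c₁, c₀]) (by simp)
    (fun l => by
      fin_cases l
      exacts [h₁conv, h₂conv, convex_setOf_sub_apply_mem hI₁.2.convex _ _,
        convex_setOf_sub_apply_mem hI₂.2.convex _ _])
    (fun k l hkl => by fin_cases k <;> fin_cases l <;> simp_all)
  have hp' := mem_iInter.mp hp
  exact ⟨p, ⟨hp' 0, hp' 1⟩, x - p, ⟨hp' 2, hp' 3⟩, add_sub_cancel _ _⟩

/-- **Lemma (2K-H)**: for convex closed `K₁, K₂ ⊆ ℝ²` with `K₁ ∩ K₂ ≠ ∅` and every closed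
axis-parallel rectangle `Π = I₁ × I₂` centered at `0` (each `Iⱼ` a closed interval symmetric
about `0`), one has `(K₁ ∩ K₂) + Π = (K₁ + Π) ∩ (K₂ + Π) ∩ H[(K₁ ∩ K₂) + Π]`. -/
theorem stmt_7 (K₁ K₂ : Set (Fin 2 → ℝ))
    (h₁conv : Convex ℝ K₁) (h₁cl : IsClosed K₁)
    (h₂conv : Convex ℝ K₂) (h₂cl : IsClosed K₂)
    (hne : (K₁ ∩ K₂).Nonempty)
    (I₁ I₂ : Set ℝ) (hI₁ : IsClosedInterval I₁) (hI₂ : IsClosedInterval I₂)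
    (hI₁sym : -I₁ = I₁) (hI₂sym : -I₂ = I₂)
    (Rect : Set (Fin 2 → ℝ)) (hRect : Rect = {x | x 0 ∈ I₁ ∧ x 1 ∈ I₂}) :
    (K₁ ∩ K₂) + Rect = (K₁ + Rect) ∩ (K₂ + Rect) ∩ rectHull ((K₁ ∩ K₂) + Rect) :=
  stmt_7_general K₁ K₂ h₁conv h₁cl h₂conv h₂cl I₁ I₂ hI₁ hI₂ Rect hRect
end

section
/- Let X be a two-dimensional Banach space, C, C₁, C₂ ⊆ X convex sets, r > 0, and suppose C₁ ∩ C₂ ∩ (C + r·B) ≠ ∅, where B is the closed unit ball. Then for every L > 1 and every ε > 0: [C₁ ∩ C₂ + (Lr + ε)B] ∩ [(C₁ + rB) ∩ C + εB] ∩ [(C₂ + rB) ∩ C + εB] ⊆ (C₁ ∩ C₂ + Lr·B) ∩ C + θ(L)·ε·B, with θ(L) = (3L+1)/(L−1). -/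
/-!
For `x` in the left-hand side pick `a ∈ C₁ ∩ C₂` with `‖x - a‖ ≤ Lr + ε` and `b ∈ C` with
`‖x - b‖ ≤ ε`. Helly's theorem in the plane, applied to `C₁`, `C₂`, `C + rB` and `B(x, Lr + ε)`,
yields `w ∈ C₁ ∩ C₂` with `‖x - w‖ ≤ Lr + ε` and `w' ∈ C` with `‖w - w'‖ ≤ r`; each three of the
four sets meet at a point obtained from the hypothesis or from one of the three memberships of `x`.
The convex combinations `(1 - t) b + t w' ∈ C` and `(1 - t) a + t w ∈ C₁ ∩ C₂` are then at
distance at most `(1 - t)(Lr + 2ε) + tr` from each other, and the first is within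
`ε + t (Lr + r)` of `x`; the weight `t = 2ε / ((L - 1) r + 2ε)` makes the former `Lr` and the
latter at most `θ(L) ε`.
-/

open Pointwise Metric Module

namespace Convex

variable {𝕜 E : Type*} [Field 𝕜] [LinearOrder 𝕜] [IsStrictOrderedRing 𝕜]
  [AddCommGroup E] [Module 𝕜 E] [FiniteDimensional 𝕜 E]

theorem iInter_nonempty_of_forall_ne {ι : Type*} [Fintype ι]
    (hcard : finrank 𝕜 E + 2 ≤ Fintype.card ι) {F : ι → Set E} (hF : ∀ i, Convex 𝕜 (F i))
    (hne : ∀ i, ∃ x, ∀ j ≠ i, x ∈ F j) : (⋂ i, F i).Nonempty := by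
  classical
  have := helly_theorem' (s := Finset.univ) (fun i _ ↦ hF i) fun I _ hI ↦ by
    obtain ⟨i, hi⟩ : ∃ i, i ∉ I := by
      by_contra! h
      have := Finset.card_le_card (fun i _ ↦ h i : Finset.univ ⊆ I)
      simp only [Finset.card_univ] at this
      omega
    obtain ⟨x, hx⟩ := hne i
    exact ⟨x, Set.mem_iInter₂.2 fun j hj ↦ hx j (ne_of_mem_of_not_mem hj hi)⟩
  simpa using this

theorem inter_inter_inter_nonempty {A B C D : Set E} (hdim : finrank 𝕜 E ≤ 2)
    (hA : Convex 𝕜 A) (hB : Convex 𝕜 B) (hC : Convex 𝕜 C) (hD : Convex 𝕜 D)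
    (hBCD : (B ∩ C ∩ D).Nonempty) (hACD : (A ∩ C ∩ D).Nonempty)
    (hABD : (A ∩ B ∩ D).Nonempty) (hABC : (A ∩ B ∩ C).Nonempty) :
    (A ∩ B ∩ C ∩ D).Nonempty := by
  have := iInter_nonempty_of_forall_ne (𝕜 := 𝕜) (F := ![A, B, C, D]) (by simpa using hdim)
    (fun i ↦ by fin_cases i <;> assumption) fun i ↦ by
      obtain ⟨a, ⟨haB, haC⟩, haD⟩ := hBCD
      obtain ⟨b, ⟨hbA, hbC⟩, hbD⟩ := hACD
      obtain ⟨c, ⟨hcA, hcB⟩, hcD⟩ := hABD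
      obtain ⟨d, ⟨hdA, hdB⟩, hdC⟩ := hABC
      fin_cases i <;> [use a; use b; use c; use d] <;> intro j hj <;> fin_cases j <;> simp_all
  simpa [Fin.forall_fin_succ, Set.Nonempty, and_assoc] using this

end Convex

section

variable {E : Type*} [SeminormedAddCommGroup E]

theorem mem_add_closedBall_zero_iff {s : Set E} {x : E} {δ : ℝ} :
    x ∈ s + closedBall 0 δ ↔ ∃ y ∈ s, ‖x - y‖ ≤ δ := by
  simp only [Set.mem_add, mem_closedBall_zero_iff]
  constructor
  · rintro ⟨y, hy, v, hv, rfl⟩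
    exact ⟨y, hy, by simpa using hv⟩
  · rintro ⟨y, hy, hxy⟩
    exact ⟨y, hy, x - y, hxy, add_sub_cancel y x⟩

theorem nonempty_inter_add_closedBall_inter_closedBall {K C : Set E} {r ε : ℝ} {x : E}
    (hx : x ∈ (K + closedBall 0 r) ∩ C + closedBall 0 ε) :
    (K ∩ (C + closedBall 0 r) ∩ closedBall x (r + ε)).Nonempty := by
  obtain ⟨y, ⟨hyK, hyC⟩, hxy⟩ := mem_add_closedBall_zero_iff.1 hx
  obtain ⟨k, hk, hyk⟩ := mem_add_closedBall_zero_iff.1 hyK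
  refine ⟨k, ⟨hk, mem_add_closedBall_zero_iff.2 ⟨y, hyC, by rwa [norm_sub_rev]⟩⟩, ?_⟩
  rw [mem_closedBall, dist_eq_norm_sub']
  calc ‖x - k‖ = ‖(y - k) + (x - y)‖ := by rw [add_comm, sub_add_sub_cancel]
    _ ≤ r + ε := (norm_add_le _ _).trans (add_le_add hyk hxy)

end

theorem exists_weight_le {L r ε : ℝ} (hL : 1 < L) (hr : 0 ≤ r) (hε : 0 ≤ ε) :
    ∃ t : ℝ, 0 ≤ t ∧ t ≤ 1 ∧ (1 - t) * (L * r + 2 * ε) + t * r ≤ L * r ∧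
      (1 - t) * ε + t * (L * r + ε + r) ≤ (3 * L + 1) / (L - 1) * ε := by
  have hD : 2 * ε ≤ (L - 1) * r + 2 * ε := by nlinarith
  obtain ⟨t, htD, ht₀, ht₁⟩ : ∃ t : ℝ, t * ((L - 1) * r + 2 * ε) = 2 * ε ∧ 0 ≤ t ∧ t ≤ 1 :=
    ⟨_, div_mul_cancel_of_imp fun h ↦ by nlinarith, by positivity,
      div_le_one_of_le₀ hD (by linarith)⟩
  refine ⟨t, ht₀, ht₁, by linarith, ?_⟩
  rw [div_mul_eq_mul_div, le_div_iff₀ (by linarith)]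
  nlinarith [mul_nonneg ht₀ hε]

section

variable {E : Type*} [SeminormedAddCommGroup E] [NormedSpace ℝ E]

theorem Convex.mem_inter_add_closedBall_of_nonempty {C K : Set E} (hC : Convex ℝ C)
    (hK : Convex ℝ K) {L r ε : ℝ} (hL : 1 < L) {x : E} (hxC : x ∈ C + closedBall 0 ε)
    (hxK : x ∈ K + closedBall 0 (L * r + ε))
    (hw : (K ∩ (C + closedBall 0 r) ∩ closedBall x (L * r + ε)).Nonempty) :
    x ∈ (K + closedBall 0 (L * r)) ∩ C + closedBall 0 ((3 * L + 1) / (L - 1) * ε) := by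
  obtain ⟨b, hb, hxb⟩ := mem_add_closedBall_zero_iff.1 hxC
  obtain ⟨a, ha, hxa⟩ := mem_add_closedBall_zero_iff.1 hxK
  obtain ⟨w, ⟨hw, hwC⟩, hxw⟩ := hw
  obtain ⟨w', hw', hww'⟩ := mem_add_closedBall_zero_iff.1 hwC
  rw [mem_closedBall, dist_eq_norm] at hxw
  obtain ⟨t, ht₀, ht₁, hyy', hxy⟩ :=
    exists_weight_le hL ((norm_nonneg _).trans hww') ((norm_nonneg _).trans hxb)
  have hconv {u v : E} : ‖(1 - t) • u + t • v‖ ≤ (1 - t) * ‖u‖ + t * ‖v‖ :=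
    convexOn_univ_norm.2 (Set.mem_univ u) (Set.mem_univ v) (by linarith) ht₀ (by ring)
  set y := (1 - t) • b + t • w'
  set y' := (1 - t) • a + t • w
  refine mem_add_closedBall_zero_iff.2 ⟨y, ⟨?_, hC hb hw' (by linarith) ht₀ (by ring)⟩, ?_⟩
  · refine mem_add_closedBall_zero_iff.2 ⟨y', hK ha hw (by linarith) ht₀ (by ring), ?_⟩
    have hba : ‖b - a‖ ≤ L * r + 2 * ε := by
      calc ‖b - a‖ = ‖(x - a) - (x - b)‖ := by rw [sub_sub_sub_cancel_left]
        _ ≤ L * r + ε + ε := (norm_sub_le _ _).trans (add_le_add hxa hxb)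
        _ = L * r + 2 * ε := by ring
    calc ‖y - y'‖ = ‖(1 - t) • (b - a) + t • (w' - w)‖ := by congr 1; module
      _ ≤ (1 - t) * ‖b - a‖ + t * ‖w' - w‖ := hconv
      _ ≤ (1 - t) * (L * r + 2 * ε) + t * r := by
          gcongr
          rwa [norm_sub_rev]
      _ ≤ L * r := hyy'
  · have hxw' : ‖x - w'‖ ≤ L * r + ε + r := by
      calc ‖x - w'‖ = ‖(x - w) + (w - w')‖ := by rw [sub_add_sub_cancel]
        _ ≤ L * r + ε + r := (norm_add_le _ _).trans (add_le_add (by rwa [norm_sub_rev]) hww')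
    calc ‖x - y‖ = ‖(1 - t) • (x - b) + t • (x - w')‖ := by congr 1; module
      _ ≤ (1 - t) * ‖x - b‖ + t * ‖x - w'‖ := hconv
      _ ≤ (1 - t) * ε + t * (L * r + ε + r) := by
          gcongr
      _ ≤ (3 * L + 1) / (L - 1) * ε := hxy

end

theorem stmt_18_general {X : Type*} [NormedAddCommGroup X] [NormedSpace ℝ X]
    (hdim : Module.finrank ℝ X = 2)
    (C C₁ C₂ : Set X) (hC : Convex ℝ C) (hC₁ : Convex ℝ C₁) (hC₂ : Convex ℝ C₂)
    (r : ℝ)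
    (hne : (C₁ ∩ C₂ ∩ (C + Metric.closedBall (0 : X) r)).Nonempty)
    (L ε : ℝ) (hL : 1 < L) :
    ((C₁ ∩ C₂) + Metric.closedBall (0 : X) (L * r + ε)) ∩
        (((C₁ + Metric.closedBall (0 : X) r) ∩ C) + Metric.closedBall (0 : X) ε) ∩
        (((C₂ + Metric.closedBall (0 : X) r) ∩ C) + Metric.closedBall (0 : X) ε) ⊆
      (((C₁ ∩ C₂) + Metric.closedBall (0 : X) (L * r)) ∩ C) +
        Metric.closedBall (0 : X) ((3 * L + 1) / (L - 1) * ε) := by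
  have : FiniteDimensional ℝ X := Module.finite_of_finrank_eq_succ hdim
  rintro x ⟨⟨hx, hx₁⟩, hx₂⟩
  have hr : 0 ≤ r := nonempty_closedBall.1 (hne.mono Set.inter_subset_right).of_add_right
  have hball : closedBall x (r + ε) ⊆ closedBall x (L * r + ε) :=
    closedBall_subset_closedBall (by nlinarith)
  have h₂ := (nonempty_inter_add_closedBall_inter_closedBall hx₂).mono
    (Set.inter_subset_inter_right _ hball)
  have h₁ := (nonempty_inter_add_closedBall_inter_closedBall hx₁).mono
    (Set.inter_subset_inter_right _ hball)
  have h₁₂ : (C₁ ∩ C₂ ∩ closedBall x (L * r + ε)).Nonempty := by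
    obtain ⟨a, ha, hxa⟩ := mem_add_closedBall_zero_iff.1 hx
    exact ⟨a, ha, by rwa [mem_closedBall, dist_eq_norm_sub']⟩
  have hw := Convex.inter_inter_inter_nonempty hdim.le hC₁ hC₂
    (hC.add (convex_closedBall 0 r)) (convex_closedBall x (L * r + ε)) h₂ h₁ h₁₂ hne
  exact hC.mem_inter_add_closedBall_of_nonempty (hC₁.inter hC₂) hL
    (Set.add_subset_add_right Set.inter_subset_right hx₁) hx hw

/-- **Proposition (P-F3)**: let `X` be a two-dimensional Banach space, `C, C₁, C₂ ⊆ X`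
convex closed sets, `r > 0` with `C₁ ∩ C₂ ∩ (C + rB) ≠ ∅`. Then for every `L > 1`, `ε > 0`:
`[C₁∩C₂ + (Lr+ε)B] ∩ [(C₁+rB)∩C + εB] ∩ [(C₂+rB)∩C + εB] ⊆ (C₁∩C₂ + LrB) ∩ C + θ(L)εB`
with `θ(L) = (3L+1)/(L−1)`. -/
theorem stmt_18 {X : Type*} [NormedAddCommGroup X] [NormedSpace ℝ X]
    (hdim : Module.finrank ℝ X = 2)
    (C C₁ C₂ : Set X) (hC : Convex ℝ C) (hC₁ : Convex ℝ C₁) (hC₂ : Convex ℝ C₂)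
    (hCcl : IsClosed C) (hC₁cl : IsClosed C₁) (hC₂cl : IsClosed C₂)
    (r : ℝ) (hr : 0 < r)
    (hne : (C₁ ∩ C₂ ∩ (C + Metric.closedBall (0 : X) r)).Nonempty)
    (L ε : ℝ) (hL : 1 < L) (hε : 0 < ε) :
    ((C₁ ∩ C₂) + Metric.closedBall (0 : X) (L * r + ε)) ∩
        (((C₁ + Metric.closedBall (0 : X) r) ∩ C) + Metric.closedBall (0 : X) ε) ∩
        (((C₂ + Metric.closedBall (0 : X) r) ∩ C) + Metric.closedBall (0 : X) ε) ⊆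
      (((C₁ ∩ C₂) + Metric.closedBall (0 : X) (L * r)) ∩ C) +
        Metric.closedBall (0 : X) ((3 * L + 1) / (L - 1) * ε) :=
  stmt_18_general hdim C C₁ C₂ hC hC₁ hC₂ r hne L ε hL
end
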